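/- arXiv:2007.03797 — 3 statements merged into one kernel-verified Lean document; each statement's English description precedes it below -/
import Mathlib

section
/- Let 𝒢 = ℱ + λ𝒜 where ℱ and 𝒜 are convex functions on ℝ^{d×m}, and suppose subgradients of ℱ at all iterates are bounded in norm by B and ‖∇𝒜(W^k)‖ ≤ B/λ for all k. With constant step sizes α_1 = ⋯ = α_K = λ/√K, the FedAMP iterates W^k (given by U^k = W^{k-1} - α_k ∇𝒜(W^{k-1}) and W^k = argmin_W ℱ(W) + (λ/(2α_k))‖W - U^k‖²) satisfy min_{0≤k≤K} 𝒢(W^k) ≤ 𝒢(W*) + (‖W^0 - W*‖² + 5B²)/√K, where W* is a minimizer of 𝒢. -/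
/-! With `s = √K`, the prox step makes `s • (W i - W (i + 1)) - λ ∇𝒜(W i)` a subgradient of `ℱ`
at `W (i + 1)`. Adding this subgradient inequality (towards `W*`) to the gradient inequalities of
`λ𝒜` at `W i` (towards `W*`) and at `W (i + 1)` (towards `W i`), everything cancels except
`s/2 (‖W i - W*‖² - ‖W (i + 1) - W*‖²)` and `⟪λ∇𝒜(W i) - λ∇𝒜(W (i + 1)), W i - W (i + 1)⟫ -
s/2 ‖W i - W (i + 1)‖²`, which Young's inequality bounds by `(2B)² / (2s)`. Summing over `i < K`
telescopes, and the least of the `K` values `𝒢(W k)` is at most their average. -/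

open Set
open scoped RealInnerProductSpace

section Subgradient

variable {E : Type*} [NormedAddCommGroup E] [InnerProductSpace ℝ E]

def IsSubgradientAt (f : E → ℝ) (y x : E) : Prop :=
  ∀ z, f x + ⟪y, z - x⟫ ≤ f z

lemma IsSubgradientAt.const_mul {f : E → ℝ} {y x : E} {c : ℝ} (hc : 0 ≤ c)
    (h : IsSubgradientAt f y x) : IsSubgradientAt (fun z ↦ c * f z) (c • y) x := fun z ↦ by
  have := mul_le_mul_of_nonneg_left (h z) hc
  rwa [mul_add, ← real_inner_smul_left] at this

lemma ConvexOn.neg_le_sub_of_isMinOn_add {φ ψ : ℝ → ℝ} {d : ℝ} (hφ : ConvexOn ℝ univ φ)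
    (hψ : HasDerivAt ψ d 0) (hmin : IsMinOn (φ + ψ) univ 0) : -d ≤ φ 1 - φ 0 := by
  have hslope : ∀ t ∈ Ioc (0 : ℝ) 1, -(t⁻¹ • (ψ (0 + t) - ψ 0)) ≤ φ 1 - φ 0 := by
    rintro t ⟨ht0, ht1⟩
    have hsum : (φ + ψ) 0 ≤ (φ + ψ) t := isMinOn_univ_iff.1 hmin t
    have hchord : slope φ 0 t ≤ slope φ 0 1 :=
      hφ.slope_mono (mem_univ 0) ⟨mem_univ t, ht0.ne'⟩ ⟨mem_univ 1, one_ne_zero⟩ ht1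
    simp only [slope_def_field, Pi.add_apply, sub_zero, div_one, zero_add, smul_eq_mul]
      at hsum hchord ⊢
    rw [div_le_iff₀ ht0] at hchord
    rw [neg_le, le_inv_mul_iff₀ ht0]
    nlinarith
  refine le_of_tendsto hψ.tendsto_slope_zero_right.neg ?_
  filter_upwards [Ioc_mem_nhdsGT_of_mem (left_mem_Ico.2 one_pos)] using hslope

lemma HasGradientAt.hasDerivAt_comp_lineMap [CompleteSpace E] {f : E → ℝ} {g x : E}
    (hf : HasGradientAt f g x) (y : E) :
    HasDerivAt (f ∘ AffineMap.lineMap (k := ℝ) x y) ⟪g, y - x⟫ 0 := by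
  have hf' : HasFDerivAt f (InnerProductSpace.toDual ℝ E g) (AffineMap.lineMap x y (0 : ℝ)) := by
    simpa using hf.hasFDerivAt
  simpa using hf'.comp_hasDerivAt (0 : ℝ) AffineMap.hasDerivAt_lineMap

lemma ConvexOn.isSubgradientAt_of_hasGradientAt [CompleteSpace E] {f : E → ℝ} {g x : E}
    (hf : ConvexOn ℝ univ f) (hg : HasGradientAt f g x) : IsSubgradientAt f g x := fun y ↦ by
  have h := (hf.comp_affineMap (AffineMap.lineMap x y)).le_slope_of_hasDerivAt
    (mem_univ 0) (mem_univ 1) one_pos (HasGradientAt.hasDerivAt_comp_lineMap hg y)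
  simp only [slope_def_field, Function.comp_apply, AffineMap.lineMap_apply_zero,
    AffineMap.lineMap_apply_one, sub_zero, div_one] at h
  linarith

lemma ConvexOn.isSubgradientAt_of_isMinOn_add_sq_norm {F : E → ℝ} {x u : E} {c : ℝ}
    (hF : ConvexOn ℝ univ F) (hmin : IsMinOn (fun z ↦ F z + c * ‖z - u‖ ^ 2) univ x) :
    IsSubgradientAt F ((2 * c) • (u - x)) x := fun z ↦ by
  have hline : HasDerivAt (fun t : ℝ ↦ AffineMap.lineMap x z t - u) (z - x) 0 :=
    AffineMap.hasDerivAt_lineMap.sub_const u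
  have hψ := hline.norm_sq.const_mul c
  have h := (hF.comp_affineMap (AffineMap.lineMap x z)).neg_le_sub_of_isMinOn_add hψ
    (fun t _ ↦ by simpa using hmin (mem_univ (AffineMap.lineMap x z t)))
  simp only [Function.comp_apply, AffineMap.lineMap_apply_zero,
    AffineMap.lineMap_apply_one] at h
  rw [real_inner_smul_left, ← neg_sub x u, inner_neg_left]
  linarith

lemma ConvexOn.isSubgradientAt_of_proxGradient_step {F : E → ℝ} {P Q g : E} {lam α : ℝ}
    (hF : ConvexOn ℝ univ F) (hα : α ≠ 0)
    (hmin : ∀ Z, F Q + lam / (2 * α) * ‖Q - (P - α • g)‖ ^ 2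
      ≤ F Z + lam / (2 * α) * ‖Z - (P - α • g)‖ ^ 2) :
    IsSubgradientAt F ((lam / α) • (P - Q) - lam • g) Q := by
  have hprox := hF.isSubgradientAt_of_isMinOn_add_sq_norm (isMinOn_univ_iff.2 hmin)
  have hcoef : 2 * (lam / (2 * α)) = lam / α := by field_simp
  rwa [hcoef, sub_right_comm, smul_sub (lam / α), smul_smul, div_mul_cancel₀ _ hα] at hprox

lemma forwardBackward_descent {F A : E → ℝ} {P Q G H : E} {s : ℝ} (hs : 0 < s)
    (hF : IsSubgradientAt F (s • (P - Q) - G) Q) (hAP : IsSubgradientAt A G P)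
    (hAQ : IsSubgradientAt A H Q) (z : E) :
    F Q + A Q ≤ F z + A z + s / 2 * (‖P - z‖ ^ 2 - ‖Q - z‖ ^ 2) + ‖G - H‖ ^ 2 / (2 * s) := by
  have hFz : F Q + ⟪s • (P - Q) - G, (P - Q) - (P - z)⟫ ≤ F z := by
    simpa only [sub_sub_sub_cancel_left] using hF z
  have hAPz : A P + ⟪G, -(P - z)⟫ ≤ A z := by simpa only [neg_sub] using hAP z
  have hAQP : A Q + ⟪H, P - Q⟫ ≤ A P := hAQ P
  have hyoung : ⟪G - H, P - Q⟫ ≤ s / 2 * ‖P - Q‖ ^ 2 + ‖G - H‖ ^ 2 / (2 * s) := by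
    have hcs := real_inner_le_norm (G - H) (P - Q)
    have hsq : ‖G - H‖ * ‖P - Q‖ ≤ s / 2 * ‖P - Q‖ ^ 2 + ‖G - H‖ ^ 2 / (2 * s) := by
      rw [div_mul_eq_mul_div, div_add_div _ _ two_ne_zero (by positivity),
        le_div_iff₀ (by positivity)]
      nlinarith [sq_nonneg (s * ‖P - Q‖ - ‖G - H‖)]
    linarith
  rw [show Q - z = (P - z) - (P - Q) by abel, norm_sub_sq_real (P - z)]
  generalize P - Q = D at hFz hAQP hyoung ⊢
  generalize P - z = a at hFz hAPz ⊢
  simp only [inner_sub_left, inner_sub_right, inner_neg_right, real_inner_smul_left,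
    real_inner_self_eq_norm_sq, real_inner_comm D a] at hFz hAPz hyoung ⊢
  linarith

lemma forwardBackward_descent_of_norm_le {F A : E → ℝ} {P Q G H : E} {s B : ℝ} (hs : 0 < s)
    (hF : IsSubgradientAt F (s • (P - Q) - G) Q) (hAP : IsSubgradientAt A G P)
    (hAQ : IsSubgradientAt A H Q) (hG : ‖G‖ ≤ B) (hH : ‖H‖ ≤ B) (z : E) :
    F Q + A Q ≤ F z + A z + 2 * B ^ 2 / s + (s / 2 * ‖P - z‖ ^ 2 - s / 2 * ‖Q - z‖ ^ 2) := by
  have hvar : ‖G - H‖ ^ 2 / (2 * s) ≤ 2 * B ^ 2 / s := by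
    have h2B : ‖G - H‖ ≤ 2 * B := (norm_sub_le G H).trans (by linarith)
    rw [div_le_div_iff₀ (by positivity) hs]
    nlinarith [pow_le_pow_left₀ (norm_nonneg _) h2B 2]
  linarith [forwardBackward_descent hs hF hAP hAQ z]

lemma exists_le_add_div_of_le_add_sub {a d : ℕ → ℝ} {c : ℝ} {K : ℕ} (hK : 1 ≤ K)
    (hd : 0 ≤ d K) (h : ∀ i < K, a (i + 1) ≤ c + (d i - d (i + 1))) :
    ∃ k ∈ Finset.Icc 1 K, a k ≤ c + d 0 / K := by
  have hKpos : (0 : ℝ) < K := by exact_mod_cast hK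
  have hsum : ∑ i ∈ Finset.range K, a (i + 1) ≤ ∑ i ∈ Finset.range K, (c + d 0 / K) :=
    calc ∑ i ∈ Finset.range K, a (i + 1)
        ≤ ∑ i ∈ Finset.range K, (c + (d i - d (i + 1))) :=
          Finset.sum_le_sum fun i hi ↦ h i (Finset.mem_range.1 hi)
      _ = K * c + (d 0 - d K) := by
          rw [Finset.sum_add_distrib, Finset.sum_range_sub', Finset.sum_const,
            Finset.card_range, nsmul_eq_mul]
      _ ≤ ∑ i ∈ Finset.range K, (c + d 0 / K) := by
          rw [Finset.sum_const, Finset.card_range, nsmul_eq_mul, mul_add,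
            mul_div_cancel₀ _ hKpos.ne']
          linarith
  obtain ⟨i, hi, hle⟩ :=
    Finset.exists_le_of_sum_le (Finset.nonempty_range_iff.2 (by omega)) hsum
  exact ⟨i + 1, Finset.mem_Icc.2 ⟨by omega, Finset.mem_range.1 hi⟩, hle⟩

end Subgradient

theorem stmt_9_general (n : ℕ) (F 𝒜 : EuclideanSpace ℝ (Fin n) → ℝ)
    (hF : ConvexOn ℝ Set.univ F) (h𝒜 : ConvexOn ℝ Set.univ 𝒜)
    (h𝒜d : Differentiable ℝ 𝒜)
    (lam B : ℝ) (hlam : 0 < lam)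
    (K : ℕ) (hK : 1 ≤ K)
    (W : ℕ → EuclideanSpace ℝ (Fin n))
    (Wstar : EuclideanSpace ℝ (Fin n))
    (hgrad : ∀ k ≤ K, ‖gradient 𝒜 (W k)‖ ≤ B / lam)
    (hiter : ∀ k, 1 ≤ k → k ≤ K → ∀ Z,
      F (W k) + (lam / (2 * (lam / Real.sqrt K))) *
          ‖W k - (W (k - 1) - (lam / Real.sqrt K) • gradient 𝒜 (W (k - 1)))‖ ^ 2
        ≤ F Z + (lam / (2 * (lam / Real.sqrt K))) *
          ‖Z - (W (k - 1) - (lam / Real.sqrt K) • gradient 𝒜 (W (k - 1)))‖ ^ 2) :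
    ∃ k ≤ K, F (W k) + lam * 𝒜 (W k)
      ≤ (F Wstar + lam * 𝒜 Wstar) + (‖W 0 - Wstar‖ ^ 2 + 5 * B ^ 2) / Real.sqrt K := by
  set s := Real.sqrt K
  have hs : 0 < s := Real.sqrt_pos.2 (by exact_mod_cast hK)
  set g := fun j ↦ lam • gradient 𝒜 (W j)
  have hg : ∀ j ≤ K, ‖g j‖ ≤ B := fun j hj ↦ by
    rw [norm_smul, Real.norm_of_nonneg hlam.le, ← le_div_iff₀' hlam]
    exact hgrad j hj
  have hsub𝒜 : ∀ j, IsSubgradientAt (fun z ↦ lam * 𝒜 z) (g j) (W j) := fun j ↦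
    (h𝒜.isSubgradientAt_of_hasGradientAt (h𝒜d _).hasGradientAt).const_mul hlam.le
  have hsubF : ∀ i < K, IsSubgradientAt F (s • (W i - W (i + 1)) - g i) (W (i + 1)) :=
    fun i hi ↦ by
      have hmin := hiter (i + 1) (by omega) hi
      rw [Nat.add_sub_cancel] at hmin
      have hprox := hF.isSubgradientAt_of_proxGradient_step (by positivity) hmin
      rwa [div_div_cancel₀ hlam.ne'] at hprox
  obtain ⟨k, hk, hle⟩ := exists_le_add_div_of_le_add_sub hK
    (a := fun k ↦ F (W k) + lam * 𝒜 (W k)) (d := fun i ↦ s / 2 * ‖W i - Wstar‖ ^ 2)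
    (by positivity) fun i hi ↦ forwardBackward_descent_of_norm_le hs (hsubF i hi) (hsub𝒜 i)
      (hsub𝒜 (i + 1)) (hg i hi.le) (hg (i + 1) hi) Wstar
  refine ⟨k, (Finset.mem_Icc.1 hk).2, hle.trans ?_⟩
  rw [← Real.sq_sqrt (Nat.cast_nonneg K)]
  field_simp
  nlinarith [sq_nonneg ‖W 0 - Wstar‖, sq_nonneg B]

/-- Convex convergence of FedAMP: with `𝒢 = ℱ + λ𝒜` convex, subgradients of `ℱ` at the
iterates bounded by `B`, `‖∇𝒜(W^k)‖ ≤ B/λ`, and constant step sizes `α_k = λ/√K`, the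
FedAMP iterates satisfy
`min_{0≤k≤K} 𝒢(W^k) ≤ 𝒢(W*) + (‖W⁰ - W*‖² + 5B²)/√K`. -/
theorem stmt_9 (n : ℕ) (F 𝒜 : EuclideanSpace ℝ (Fin n) → ℝ)
    (hF : ConvexOn ℝ Set.univ F) (h𝒜 : ConvexOn ℝ Set.univ 𝒜)
    (h𝒜d : Differentiable ℝ 𝒜)
    (lam B : ℝ) (hlam : 0 < lam) (hB : 0 < B)
    (K : ℕ) (hK : 1 ≤ K)
    (W : ℕ → EuclideanSpace ℝ (Fin n))
    (Wstar : EuclideanSpace ℝ (Fin n))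
    (hWstar : ∀ Z, F Wstar + lam * 𝒜 Wstar ≤ F Z + lam * 𝒜 Z)
    (hsub : ∀ k ≤ K, ∀ Y : EuclideanSpace ℝ (Fin n),
      (∀ Z, F (W k) + (inner ℝ Y (Z - W k) : ℝ) ≤ F Z) → ‖Y‖ ≤ B)
    (hgrad : ∀ k ≤ K, ‖gradient 𝒜 (W k)‖ ≤ B / lam)
    (hiter : ∀ k, 1 ≤ k → k ≤ K → ∀ Z,
      F (W k) + (lam / (2 * (lam / Real.sqrt K))) *
          ‖W k - (W (k - 1) - (lam / Real.sqrt K) • gradient 𝒜 (W (k - 1)))‖ ^ 2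
        ≤ F Z + (lam / (2 * (lam / Real.sqrt K))) *
          ‖Z - (W (k - 1) - (lam / Real.sqrt K) • gradient 𝒜 (W (k - 1)))‖ ^ 2) :
    ∃ k ≤ K, F (W k) + lam * 𝒜 (W k)
      ≤ (F Wstar + lam * 𝒜 Wstar) + (‖W 0 - Wstar‖ ^ 2 + 5 * B ^ 2) / Real.sqrt K :=
  stmt_9_general n F 𝒜 hF h𝒜 h𝒜d lam B hlam K hK W Wstar hgrad hiter
end

section
/- Under the assumptions of the convex FedAMP convergence theorem, if instead the step sizes α_k > 0 satisfy Σ_{k=1}^∞ α_k = ∞ and Σ_{k=1}^∞ α_k² < ∞, then liminf_{k→∞} 𝒢(W^k) = 𝒢*, the optimal value of 𝒢. -/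
/-!
Put `Y = (λ / α_k) (U^k - W^k)`. Optimality of the proximal step makes `Y` a subgradient of `ℱ`
at `W^k`, so `W^k = W^{k-1} - (α_k / λ) h_k` with `h_k = λ ∇𝒜(W^{k-1}) + Y` and `‖h_k‖ ≤ 2B`:
the scheme is an inexact subgradient method for `𝒢`, the inexactness being controlled by
`‖W^{k-1} - W^k‖ ≤ 2Bα_k/λ`. The classical estimate gives
`‖W^k - W*‖² + (2α_k/λ)(𝒢(W^k) - 𝒢*) ≤ ‖W^{k-1} - W*‖² + 12 (B/λ)² α_k²`.
If `𝒢(W^k) - 𝒢* ≥ ε` for all large `k`, summing gives `ε Σ α_k ≤ const + 12 (B/λ)² Σ α_k² < ∞`,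
contradicting `Σ α_k = ∞`.
-/

open Set Filter Topology Finset
open scoped InnerProductSpace

section SubgradientStep

variable {E : Type*} [NormedAddCommGroup E] [InnerProductSpace ℝ E]

def HasSubgradientAt (f : E → ℝ) (g x : E) : Prop :=
  ∀ z, f x + ⟪g, z - x⟫_ℝ ≤ f z

theorem ConvexOn.hasSubgradientAt_gradient [CompleteSpace E] {f : E → ℝ}
    (hf : ConvexOn ℝ univ f) {x : E} (hd : DifferentiableAt ℝ f x) :
    HasSubgradientAt f (gradient f x) x := by
  intro z
  have hline : HasDerivAt (f ∘ AffineMap.lineMap x z) ⟪gradient f x, z - x⟫_ℝ (0 : ℝ) := by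
    simpa using hd.hasGradientAt.hasFDerivAt.comp_hasDerivAt_of_eq (0 : ℝ)
      AffineMap.hasDerivAt_lineMap (by simp)
  have := (hf.comp_affineMap (AffineMap.lineMap x z)).le_slope_of_hasDerivAt
    (mem_univ 0) (mem_univ 1) zero_lt_one hline
  simp only [slope_def_field, Function.comp_apply, AffineMap.lineMap_apply_zero,
    AffineMap.lineMap_apply_one, sub_zero, div_one] at this
  linarith

theorem hasSubgradientAt_of_forall_le_add_norm_sub_sq {f : E → ℝ} (hf : ConvexOn ℝ univ f)
    {c : ℝ} {u w : E} (hmin : ∀ z, f w + c * ‖w - u‖ ^ 2 ≤ f z + c * ‖z - u‖ ^ 2) :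
    HasSubgradientAt f ((2 * c) • (u - w)) w := by
  intro z
  have hinner : ⟪(2 * c) • (u - w), z - w⟫_ℝ = -(2 * c * ⟪w - u, z - w⟫_ℝ) := by
    rw [real_inner_smul_left, ← neg_sub w u, inner_neg_left]; ring
  -- Comparing `w` with the points `w + t (z - w)`, the quadratic term contributes only `O(t²)`.
  have hsmall : ∀ t ∈ Ioc (0 : ℝ) 1,
      f w - 2 * c * ⟪w - u, z - w⟫_ℝ ≤ f z + c * t * ‖z - w‖ ^ 2 := by
    intro t ⟨ht0, ht1⟩
    have hconv := hf.2 (mem_univ w) (mem_univ z) (sub_nonneg.2 ht1) ht0.le (sub_add_cancel 1 t)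
    rw [show (1 - t) • w + t • z = w + t • (z - w) by module, smul_eq_mul, smul_eq_mul] at hconv
    have hexpand : ‖w + t • (z - w) - u‖ ^ 2
        = ‖w - u‖ ^ 2 + 2 * t * ⟪w - u, z - w⟫_ℝ + t ^ 2 * ‖z - w‖ ^ 2 := by
      rw [show w + t • (z - w) - u = (w - u) + t • (z - w) by abel, norm_add_sq_real,
        real_inner_smul_right, norm_smul, mul_pow, Real.norm_eq_abs, sq_abs]
      ring
    have := hmin (w + t • (z - w))
    rw [hexpand] at this
    refine le_of_mul_le_mul_left ?_ ht0
    nlinarith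
  have hlim : Tendsto (fun t : ℝ => f z + c * t * ‖z - w‖ ^ 2) (𝓝[>] 0) (𝓝 (f z)) :=
    tendsto_nhdsWithin_of_tendsto_nhds <| by
      simpa using (show Continuous fun t : ℝ => f z + c * t * ‖z - w‖ ^ 2 by fun_prop).tendsto 0
  rw [hinner, ← sub_eq_add_neg]
  exact ge_of_tendsto hlim (mem_of_superset (Ioc_mem_nhdsGT zero_lt_one) hsmall)

theorem sub_le_inner_add_mul_norm_sub [CompleteSpace E] {F A : E → ℝ}
    (hA : ConvexOn ℝ univ A) {lam B : ℝ} (hlam : 0 < lam) {Y x p w : E}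
    (hAx : DifferentiableAt ℝ A x) (hAp : DifferentiableAt ℝ A p)
    (hY : HasSubgradientAt F Y p) (hYB : ‖Y‖ ≤ B) (hgp : ‖gradient A p‖ ≤ B / lam) :
    (F p + lam * A p) - (F w + lam * A w)
      ≤ ⟪lam • gradient A x + Y, x - w⟫_ℝ + 2 * B * ‖x - p‖ := by
  have hFw := hY w
  have hAw := hA.hasSubgradientAt_gradient hAx w
  have hAxp := hA.hasSubgradientAt_gradient hAp x
  have hgp' : -(B * ‖x - p‖) ≤ lam * ⟪gradient A p, x - p⟫_ℝ :=
    calc -(B * ‖x - p‖) ≤ -(lam * ‖gradient A p‖ * ‖x - p‖) := by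
          gcongr; rwa [le_div_iff₀' hlam] at hgp
      _ = lam * -(‖gradient A p‖ * ‖x - p‖) := by ring
      _ ≤ lam * ⟪gradient A p, x - p⟫_ℝ := by
          gcongr; exact (abs_le.1 (abs_real_inner_le_norm _ _)).1
  have hY' : -(B * ‖x - p‖) ≤ ⟪Y, x - p⟫_ℝ :=
    (abs_le.1 ((abs_real_inner_le_norm _ _).trans
      (mul_le_mul_of_nonneg_right hYB (norm_nonneg _)))).1
  have hsplit : ⟪lam • gradient A x + Y, x - w⟫_ℝ
      = -(lam * ⟪gradient A x, w - x⟫_ℝ) + ⟪Y, x - p⟫_ℝ - ⟪Y, w - p⟫_ℝ := by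
    have hY_split : ⟪Y, x - w⟫_ℝ = ⟪Y, x - p⟫_ℝ - ⟪Y, w - p⟫_ℝ := by
      rw [← inner_sub_right, sub_sub_sub_cancel_right]
    have hA_flip : ⟪gradient A x, x - w⟫_ℝ = -⟪gradient A x, w - x⟫_ℝ := by
      rw [← inner_neg_right, neg_sub]
    rw [inner_add_left, real_inner_smul_left, hY_split, hA_flip]
    ring
  rw [hsplit]
  linarith [mul_le_mul_of_nonneg_left hAw hlam.le, mul_le_mul_of_nonneg_left hAxp hlam.le]

theorem norm_sub_sq_add_le_of_prox_gradient_step [CompleteSpace E] {F A : E → ℝ}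
    (hF : ConvexOn ℝ univ F) (hA : ConvexOn ℝ univ A) {lam a B : ℝ} (hlam : 0 < lam)
    (ha : 0 < a) {x p w : E} (hAx : DifferentiableAt ℝ A x) (hAp : DifferentiableAt ℝ A p)
    (hprox : ∀ z, F p + lam / (2 * a) * ‖p - (x - a • gradient A x)‖ ^ 2
      ≤ F z + lam / (2 * a) * ‖z - (x - a • gradient A x)‖ ^ 2)
    (hsub : ∀ Y, HasSubgradientAt F Y p → ‖Y‖ ≤ B)
    (hgx : ‖gradient A x‖ ≤ B / lam) (hgp : ‖gradient A p‖ ≤ B / lam) :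
    ‖p - w‖ ^ 2 + a * (2 / lam * ((F p + lam * A p) - (F w + lam * A w)))
      ≤ ‖x - w‖ ^ 2 + 12 * (B / lam) ^ 2 * a ^ 2 := by
  set Y := (lam / a) • (x - a • gradient A x - p)
  have hY : HasSubgradientAt F Y p := by
    have := hasSubgradientAt_of_forall_le_add_norm_sub_sq hF hprox
    rwa [show 2 * (lam / (2 * a)) = lam / a by field_simp] at this
  have hYB := hsub Y hY
  set h := lam • gradient A x + Y
  have hp : x - p = (a / lam) • h := by
    simp only [h, Y, smul_add, smul_smul]
    rw [show a / lam * lam = a by field_simp, show a / lam * (lam / a) = 1 by field_simp, one_smul]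
    abel
  have hh : ‖h‖ ≤ 2 * B := by
    calc ‖h‖ ≤ lam * ‖gradient A x‖ + ‖Y‖ := by
          simpa [norm_smul, abs_of_pos hlam] using norm_add_le (lam • gradient A x) Y
      _ ≤ B + B := by gcongr; rwa [le_div_iff₀' hlam] at hgx
      _ = 2 * B := by ring
  have hxp : ‖x - p‖ = a / lam * ‖h‖ := by
    rw [hp, norm_smul, Real.norm_of_nonneg (by positivity)]
  have hdescent : (F p + lam * A p) - (F w + lam * A w)
      ≤ ⟪h, x - w⟫_ℝ + 2 * B * (a / lam * ‖h‖) :=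
    hxp ▸ sub_le_inner_add_mul_norm_sub hA hlam hAx hAp hY hYB hgp
  have hexpand : ‖p - w‖ ^ 2
      = ‖x - w‖ ^ 2 - 2 * (a / lam) * ⟪h, x - w⟫_ℝ + (a / lam) ^ 2 * ‖h‖ ^ 2 := by
    rw [show p - w = (x - w) - (a / lam) • h by rw [← hp]; abel, norm_sub_sq_real,
      real_inner_smul_right, norm_smul, mul_pow, Real.norm_eq_abs, sq_abs, real_inner_comm]
    ring
  have hB : 0 ≤ B := (norm_nonneg Y).trans hYB
  have hinner := mul_le_mul_of_nonneg_left hdescent (by positivity : 0 ≤ 2 * (a / lam))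
  have hsq : ‖h‖ ^ 2 ≤ (2 * B) ^ 2 := pow_le_pow_left₀ (norm_nonneg h) hh 2
  have hlin : B * ‖h‖ ≤ B * (2 * B) := mul_le_mul_of_nonneg_left hh hB
  rw [hexpand]
  have e1 : a * (2 / lam * ((F p + lam * A p) - (F w + lam * A w)))
      = 2 * (a / lam) * ((F p + lam * A p) - (F w + lam * A w)) := by ring
  have e2 : 12 * (B / lam) ^ 2 * a ^ 2 = 12 * B ^ 2 * (a / lam) ^ 2 := by ring
  rw [e1, e2]
  linarith [mul_le_mul_of_nonneg_left hsq (sq_nonneg (a / lam)),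
    mul_le_mul_of_nonneg_left hlin (sq_nonneg (a / lam))]

end SubgradientStep

theorem frequently_lt_of_descent {d e α : ℕ → ℝ} {C ε : ℝ} (hd : ∀ k, 0 ≤ d k)
    (hα : ∀ k, 0 ≤ α k) (hdiv : Tendsto (fun N => ∑ k ∈ range N, α k) atTop atTop)
    (hsq : Summable fun k => α k ^ 2) (hC : 0 ≤ C)
    (hstep : ∀ k, d (k + 1) + α (k + 1) * e (k + 1) ≤ d k + C * α (k + 1) ^ 2) (hε : 0 < ε) :
    ∃ᶠ k in atTop, e k < ε := by
  by_contra hfreq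
  obtain ⟨N, hN⟩ := eventually_atTop.1 (not_frequently.1 hfreq)
  set Φ : ℕ → ℝ := fun k =>
    d k + ε * ∑ j ∈ range (k + 1), α j - C * ∑ j ∈ range (k + 1), α j ^ 2 with hΦ
  have hΦ_le : ∀ k ≥ N, Φ k ≤ Φ N := by
    intro k hk
    induction k, hk using Nat.le_induction with
    | base => exact le_rfl
    | succ k hk ih =>
      have hek : ε ≤ e (k + 1) := not_lt.1 (hN (k + 1) (by omega))
      have := mul_le_mul_of_nonneg_left hek (hα (k + 1))
      simp only [hΦ, sum_range_succ _ (k + 1)] at ih ⊢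
      linarith [hstep k]
  have hbdd : ∀ k ≥ N, ε * ∑ j ∈ range (k + 1), α j ≤ Φ N + C * ∑' j, α j ^ 2 := by
    intro k hk
    have hT := mul_le_mul_of_nonneg_left
      (hsq.sum_le_tsum (range (k + 1)) fun j _ => sq_nonneg (α j)) hC
    linarith [hΦ_le k hk, hd k]
  obtain ⟨k, hk_large, hkN⟩ := (((hdiv.comp (tendsto_add_atTop_nat 1)).eventually_gt_atTop
    ((Φ N + C * ∑' j, α j ^ 2) / ε)).and (eventually_ge_atTop N)).exists
  rw [Function.comp_apply, div_lt_iff₀' hε] at hk_large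
  exact (hbdd k hkN).not_gt hk_large

theorem liminf_eq_of_forall_frequently_lt {ι : Type*} {f : Filter ι} {u : ι → ℝ} {c : ℝ}
    (hle : ∀ᶠ i in f, c ≤ u i) (hlt : ∀ ε > 0, ∃ᶠ i in f, u i < c + ε) :
    liminf u f = c := by
  have hcobdd : f.IsCoboundedUnder (· ≥ ·) u :=
    IsCoboundedUnder.of_frequently_le ((hlt 1 one_pos).mono fun _ h => h.le)
  refine le_antisymm (le_of_forall_pos_le_add fun ε hε => ?_) (le_liminf_of_le hcobdd hle)
  exact liminf_le_of_frequently_le ((hlt ε hε).mono fun _ h => h.le)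
    (isBoundedUnder_of_eventually_ge hle)

theorem stmt_10_general (n : ℕ) (F 𝒜 : EuclideanSpace ℝ (Fin n) → ℝ)
    (hF : ConvexOn ℝ Set.univ F) (h𝒜 : ConvexOn ℝ Set.univ 𝒜)
    (h𝒜d : Differentiable ℝ 𝒜)
    (lam B : ℝ) (hlam : 0 < lam)
    (α : ℕ → ℝ) (hαpos : ∀ k, 0 < α k)
    (hαdiv : Tendsto (fun N => ∑ k ∈ Finset.range N, α k) atTop atTop)
    (hαsq : Summable fun k => (α k) ^ 2)
    (W : ℕ → EuclideanSpace ℝ (Fin n))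
    (Wstar : EuclideanSpace ℝ (Fin n))
    (hWstar : ∀ Z, F Wstar + lam * 𝒜 Wstar ≤ F Z + lam * 𝒜 Z)
    (hsub : ∀ k, ∀ Y : EuclideanSpace ℝ (Fin n),
      (∀ Z, F (W k) + (inner ℝ Y (Z - W k) : ℝ) ≤ F Z) → ‖Y‖ ≤ B)
    (hgrad : ∀ k, ‖gradient 𝒜 (W k)‖ ≤ B / lam)
    (hiter : ∀ k, 1 ≤ k → ∀ Z,
      F (W k) + (lam / (2 * α k)) *
          ‖W k - (W (k - 1) - α k • gradient 𝒜 (W (k - 1)))‖ ^ 2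
        ≤ F Z + (lam / (2 * α k)) *
          ‖Z - (W (k - 1) - α k • gradient 𝒜 (W (k - 1)))‖ ^ 2) :
    liminf (fun k => F (W k) + lam * 𝒜 (W k)) atTop = F Wstar + lam * 𝒜 Wstar := by
  refine liminf_eq_of_forall_frequently_lt (Eventually.of_forall fun k => hWstar (W k))
    fun ε hε => ?_
  have hstep : ∀ k, ‖W (k + 1) - Wstar‖ ^ 2 + α (k + 1) *
        (2 / lam * ((F (W (k + 1)) + lam * 𝒜 (W (k + 1))) - (F Wstar + lam * 𝒜 Wstar)))
      ≤ ‖W k - Wstar‖ ^ 2 + 12 * (B / lam) ^ 2 * α (k + 1) ^ 2 := fun k =>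
    norm_sub_sq_add_le_of_prox_gradient_step hF h𝒜 hlam (hαpos (k + 1)) (h𝒜d _) (h𝒜d _)
      (by simpa using hiter (k + 1) (Nat.le_add_left 1 k)) (hsub (k + 1)) (hgrad k) (hgrad (k + 1))
  have hfreq := frequently_lt_of_descent
    (e := fun k => 2 / lam * ((F (W k) + lam * 𝒜 (W k)) - (F Wstar + lam * 𝒜 Wstar)))
    (fun k => sq_nonneg ‖W k - Wstar‖) (fun k => (hαpos k).le) hαdiv hαsq (by positivity) hstep
    (mul_pos (by positivity : 0 < 2 / lam) hε)
  exact hfreq.mono fun k hk => sub_lt_iff_lt_add'.1 (lt_of_mul_lt_mul_left hk (by positivity))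

/-- Convex FedAMP with diminishing step sizes: if `Σ α_k = ∞` and `Σ α_k² < ∞`, then
`liminf_{k→∞} 𝒢(W^k) = 𝒢*`, the optimal value of `𝒢 = ℱ + λ𝒜`. -/
theorem stmt_10 (n : ℕ) (F 𝒜 : EuclideanSpace ℝ (Fin n) → ℝ)
    (hF : ConvexOn ℝ Set.univ F) (h𝒜 : ConvexOn ℝ Set.univ 𝒜)
    (h𝒜d : Differentiable ℝ 𝒜)
    (lam B : ℝ) (hlam : 0 < lam) (hB : 0 < B)
    (α : ℕ → ℝ) (hαpos : ∀ k, 0 < α k)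
    (hαdiv : Tendsto (fun N => ∑ k ∈ Finset.range N, α k) atTop atTop)
    (hαsq : Summable fun k => (α k) ^ 2)
    (W : ℕ → EuclideanSpace ℝ (Fin n))
    (Wstar : EuclideanSpace ℝ (Fin n))
    (hWstar : ∀ Z, F Wstar + lam * 𝒜 Wstar ≤ F Z + lam * 𝒜 Z)
    (hsub : ∀ k, ∀ Y : EuclideanSpace ℝ (Fin n),
      (∀ Z, F (W k) + (inner ℝ Y (Z - W k) : ℝ) ≤ F Z) → ‖Y‖ ≤ B)
    (hgrad : ∀ k, ‖gradient 𝒜 (W k)‖ ≤ B / lam)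
    (hiter : ∀ k, 1 ≤ k → ∀ Z,
      F (W k) + (lam / (2 * α k)) *
          ‖W k - (W (k - 1) - α k • gradient 𝒜 (W (k - 1)))‖ ^ 2
        ≤ F Z + (lam / (2 * α k)) *
          ‖Z - (W (k - 1) - α k • gradient 𝒜 (W (k - 1)))‖ ^ 2) :
    liminf (fun k => F (W k) + lam * 𝒜 (W k)) atTop = F Wstar + lam * 𝒜 Wstar :=
  stmt_10_general n F 𝒜 hF h𝒜 h𝒜d lam B hlam α hαpos hαdiv hαsq W Wstar hWstar hsub hgrad hiter
end

section
/- Let 𝒢 = ℱ + λ𝒜 with ℱ, 𝒜 continuously differentiable and ∇ℱ, ∇𝒜 Lipschitz with modulus L, and suppose ‖∇ℱ(W^k)‖ ≤ B, ‖∇𝒜(W^k)‖ ≤ B/λ for all k. With constant step sizes α_k = λ/√K, the FedAMP iterates satisfy min_{0≤k≤K} ‖∇𝒢(W^k)‖² ≤ 18(𝒢(W^0) - 𝒢* + 20LB²)/√K + O(1/K), where 𝒢* is the optimal value of 𝒢. -/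
/-!
With `α = λ/√K` the FedAMP update is a proximal gradient step for `𝒢 = ℱ + λ𝒜` whose proximal
coefficient is `λ/(2α) = √K/2`. Comparing `W^{k+1}` with `W^k` in the proximal problem and
applying the descent lemma to `𝒜` shows that each step lowers `𝒢` by `(√K - λL)/2 ‖W^{k+1} - W^k‖²`,
which is at least `√K/4 ‖W^{k+1} - W^k‖²` once `√K ≥ 2λL`. Telescoping then produces a step with
`‖W^{k+1} - W^k‖² ≤ 4(𝒢(W⁰) - 𝒢*)/(√K K)`, and the first-order condition of the proximal problem
gives `∇𝒢(W^{k+1}) = -√K (W^{k+1} - W^k) + λ(∇𝒜(W^{k+1}) - ∇𝒜(W^k))`, so that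
`‖∇𝒢(W^{k+1})‖² ≤ (3√K/2)² ‖W^{k+1} - W^k‖² ≤ 9(𝒢(W⁰) - 𝒢*)/√K`.
For the finitely many `K < 4λ²L²`, the bound `‖∇𝒢(W⁰)‖ ≤ 2B` is absorbed by the term `16B²λ²L²/K`.
-/

open Set InnerProductSpace
open scoped NNReal RealInnerProductSpace

section Gradient

variable {E : Type*} [NormedAddCommGroup E] [InnerProductSpace ℝ E] [CompleteSpace E]

theorem HasGradientAt.add_const_mul {f g : E → ℝ} {f' g' x : E} (hf : HasGradientAt f f' x)
    (hg : HasGradientAt g g' x) (c : ℝ) :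
    HasGradientAt (fun z => f z + c * g z) (f' + c • g') x := by
  rw [hasGradientAt_iff_hasFDerivAt, map_add, map_smul]
  exact hf.hasFDerivAt.add (hg.hasFDerivAt.const_mul c)

theorem hasGradientAt_sq_norm_sub (u x : E) :
    HasGradientAt (fun z => ‖z - u‖ ^ 2) ((2 : ℝ) • (x - u)) x := by
  rw [hasGradientAt_iff_hasFDerivAt]
  refine ((hasFDerivAt_id x).sub_const u).norm_sq.congr_fderiv ?_
  ext v
  simp

theorem HasGradientAt.eq_zero_of_isLocalMin {f : E → ℝ} {f' x : E} (hf : HasGradientAt f f' x)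
    (hmin : IsLocalMin f x) : f' = 0 :=
  (toDual ℝ E).injective <| by rw [hmin.hasFDerivAt_eq_zero hf.hasFDerivAt, map_zero]

theorem norm_gradient_add_const_mul_le_two_mul {f g : E → ℝ} {x : E}
    (hf : DifferentiableAt ℝ f x) (hg : DifferentiableAt ℝ g x) {c B : ℝ} (hc : 0 < c)
    (hfB : ‖gradient f x‖ ≤ B) (hgB : ‖gradient g x‖ ≤ B / c) :
    ‖gradient (fun z => f z + c * g z) x‖ ≤ 2 * B := by
  rw [(hf.hasGradientAt.add_const_mul hg.hasGradientAt c).gradient]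
  calc ‖gradient f x + c • gradient g x‖ ≤ ‖gradient f x‖ + ‖c • gradient g x‖ := norm_add_le _ _
    _ = ‖gradient f x‖ + c * ‖gradient g x‖ := by rw [norm_smul, Real.norm_of_nonneg hc.le]
    _ ≤ B + c * (B / c) := by gcongr
    _ = 2 * B := by field_simp; ring

theorem descent_lemma {f : E → ℝ} (hf : Differentiable ℝ f) {L : ℝ≥0}
    (hLip : LipschitzWith L (gradient f)) (x y : E) :
    f y ≤ f x + ⟪gradient f x, y - x⟫ + L / 2 * ‖y - x‖ ^ 2 := by
  set d := y - x
  set φ : ℝ → ℝ := fun t => f (x + t • d) - t * ⟪gradient f x, d⟫ - L / 2 * t ^ 2 * ‖d‖ ^ 2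
  have hφ : ∀ t : ℝ, HasDerivAt φ
      (⟪gradient f (x + t • d) - gradient f x, d⟫ - L * t * ‖d‖ ^ 2) t := by
    intro t
    have hline : HasDerivAt (fun t : ℝ => x + t • d) d t := by
      simpa using ((hasDerivAt_id t).smul_const d).const_add x
    have hcomp := (hf (x + t • d)).hasGradientAt.hasFDerivAt.comp_hasDerivAt t hline
    rw [toDual_apply_apply] at hcomp
    refine ((hcomp.sub ((hasDerivAt_id t).mul_const ⟪gradient f x, d⟫)).sub
      (((hasDerivAt_pow 2 t).const_mul (L / 2 : ℝ)).mul_const (‖d‖ ^ 2))).congr_deriv ?_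
    rw [inner_sub_left]
    push_cast
    ring
  have hanti : AntitoneOn φ (Icc 0 1) := by
    refine antitoneOn_of_hasDerivWithinAt_nonpos (convex_Icc 0 1)
      (fun t _ => (hφ t).continuousAt.continuousWithinAt)
      (fun t _ => (hφ t).hasDerivWithinAt) fun t ht => ?_
    rw [interior_Icc] at ht
    have hgrad : ‖gradient f (x + t • d) - gradient f x‖ ≤ L * t * ‖d‖ := by
      calc ‖gradient f (x + t • d) - gradient f x‖ ≤ L * ‖x + t • d - x‖ := hLip.norm_sub_le _ _
        _ = L * t * ‖d‖ := by
          rw [add_sub_cancel_left, norm_smul, Real.norm_of_nonneg ht.1.le, mul_assoc]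
    have := (real_inner_le_norm _ d).trans (mul_le_mul_of_nonneg_right hgrad (norm_nonneg d))
    nlinarith
  have h01 := hanti (left_mem_Icc.2 zero_le_one) (right_mem_Icc.2 zero_le_one) zero_le_one
  simp only [φ, d, zero_smul, add_zero, one_smul, add_sub_cancel] at h01
  linarith

def IsProxGradStep (F A : E → ℝ) (lam α : ℝ) (x y : E) : Prop :=
  ∀ z, F y + lam / (2 * α) * ‖y - (x - α • gradient A x)‖ ^ 2
    ≤ F z + lam / (2 * α) * ‖z - (x - α • gradient A x)‖ ^ 2

namespace IsProxGradStep

variable {F A : E → ℝ} {lam α : ℝ} {x y : E}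

theorem gradient_eq (h : IsProxGradStep F A lam α x y) (hF : DifferentiableAt ℝ F y) :
    gradient F y = -(lam / α) • (y - (x - α • gradient A x)) := by
  have hzero := (hF.hasGradientAt.add_const_mul (hasGradientAt_sq_norm_sub _ y)
    (lam / (2 * α))).eq_zero_of_isLocalMin (Filter.Eventually.of_forall h)
  linear_combination (norm := module) hzero

theorem add_sq_norm_add_inner_le (h : IsProxGradStep F A lam α x y) (hα : α ≠ 0) :
    F y + lam / (2 * α) * ‖y - x‖ ^ 2 + lam * ⟪gradient A x, y - x⟫ ≤ F x := by
  have hx := h x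
  rw [show y - (x - α • gradient A x) = (y - x) + α • gradient A x by abel,
    show x - (x - α • gradient A x) = α • gradient A x by abel, norm_add_sq_real,
    inner_smul_right, real_inner_comm] at hx
  have hcoef : lam / (2 * α) * (2 * (α * ⟪gradient A x, y - x⟫))
      = lam * ⟪gradient A x, y - x⟫ := by
    field_simp
  linarith

theorem sufficient_decrease (h : IsProxGradStep F A lam α x y) (hA : Differentiable ℝ A)
    {L : ℝ≥0} (hLip : LipschitzWith L (gradient A)) (hlam : 0 ≤ lam) (hα : α ≠ 0) :
    F y + lam * A y ≤ F x + lam * A x - (lam / α - lam * L) / 2 * ‖y - x‖ ^ 2 := by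
  have hprox := h.add_sq_norm_add_inner_le hα
  have hdescent := mul_le_mul_of_nonneg_left (descent_lemma hA hLip x y) hlam
  have hcoef : lam / (2 * α) = lam / α / 2 := by ring
  rw [hcoef] at hprox
  linarith

theorem norm_gradient_le (h : IsProxGradStep F A lam α x y) (hF : DifferentiableAt ℝ F y)
    (hA : DifferentiableAt ℝ A y) {L : ℝ≥0} (hLip : LipschitzWith L (gradient A))
    (hlam : 0 ≤ lam) (hα : 0 < α) :
    ‖gradient (fun z => F z + lam * A z) y‖ ≤ (lam / α + lam * L) * ‖y - x‖ := by
  have hgrad : gradient (fun z => F z + lam * A z) y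
      = -(lam / α) • (y - x) + lam • (gradient A y - gradient A x) := by
    rw [(hF.hasGradientAt.add_const_mul hA.hasGradientAt lam).gradient, h.gradient_eq hF]
    linear_combination (norm := module) (-div_mul_cancel₀ lam hα.ne') • gradient A x
  calc ‖gradient (fun z => F z + lam * A z) y‖
      ≤ lam / α * ‖y - x‖ + lam * (L * ‖y - x‖) := by
        rw [hgrad]
        refine (norm_add_le _ _).trans (add_le_add ?_ ?_) <;>
          rw [norm_smul, Real.norm_eq_abs]
        · rw [abs_neg, abs_of_nonneg (div_nonneg hlam hα.le)]
        · rw [abs_of_nonneg hlam]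
          exact mul_le_mul_of_nonneg_left (hLip.norm_sub_le y x) hlam
    _ = (lam / α + lam * L) * ‖y - x‖ := by ring

end IsProxGradStep

theorem exists_le_div_of_forall_add_le {f d : ℕ → ℝ} {K : ℕ} (hK : 0 < K) {m : ℝ}
    (hm : m ≤ f K) (hdec : ∀ k < K, f (k + 1) + d k ≤ f k) :
    ∃ k < K, d k ≤ (f 0 - m) / K := by
  have hsum : ∑ k ∈ Finset.range K, d k ≤ ∑ _k ∈ Finset.range K, (f 0 - m) / K := by
    calc ∑ k ∈ Finset.range K, d k ≤ ∑ k ∈ Finset.range K, (f k - f (k + 1)) :=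
          Finset.sum_le_sum fun k hk => by linarith [hdec k (Finset.mem_range.1 hk)]
      _ = f 0 - f K := Finset.sum_range_sub' f K
      _ ≤ ∑ _k ∈ Finset.range K, (f 0 - m) / K := by
          rw [Finset.sum_const, Finset.card_range, nsmul_eq_mul,
            mul_div_cancel₀ _ (Nat.cast_ne_zero.2 hK.ne')]
          linarith
  obtain ⟨k, hk, hle⟩ := Finset.exists_le_of_sum_le (Finset.nonempty_range_iff.2 hK.ne') hsum
  exact ⟨k, Finset.mem_range.1 hk, hle⟩

theorem exists_sq_norm_gradient_le_of_isProxGradStep {F A : E → ℝ} (hF : Differentiable ℝ F)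
    (hA : Differentiable ℝ A) {L : ℝ≥0} (hLip : LipschitzWith L (gradient A)) {lam α m : ℝ}
    (hlam : 0 ≤ lam) (hα : 0 < α) (hαL : 2 * α * L ≤ 1) (hm : ∀ z, m ≤ F z + lam * A z)
    {K : ℕ} (hK : 0 < K) {W : ℕ → E} (hW : ∀ k < K, IsProxGradStep F A lam α (W k) (W (k + 1))) :
    ∃ k ≤ K, ‖gradient (fun z => F z + lam * A z) (W k)‖ ^ 2
      ≤ 9 * (lam / α) * (F (W 0) + lam * A (W 0) - m) / K := by
  set c := lam / α
  have hc : 2 * lam * L ≤ c := by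
    rw [le_div_iff₀ hα]
    nlinarith
  -- Since `λL ≤ c/2`, each step decreases `F + λA` by at least `c/4 ‖W (k+1) - W k‖²`.
  obtain ⟨k, hk, hstep⟩ := exists_le_div_of_forall_add_le
    (f := fun k => F (W k) + lam * A (W k)) (d := fun k => c / 4 * ‖W (k + 1) - W k‖ ^ 2)
    hK (hm (W K)) fun k hk => by
      have := (hW k hk).sufficient_decrease hA hLip hlam hα.ne'
      nlinarith [sq_nonneg ‖W (k + 1) - W k‖]
  refine ⟨k + 1, hk, ?_⟩
  have hnorm := (hW k hk).norm_gradient_le (hF _) (hA _) hLip hlam hα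
  calc ‖gradient (fun z => F z + lam * A z) (W (k + 1))‖ ^ 2
      ≤ ((c + lam * L) * ‖W (k + 1) - W k‖) ^ 2 := pow_le_pow_left₀ (norm_nonneg _) hnorm 2
    _ ≤ (3 / 2 * c * ‖W (k + 1) - W k‖) ^ 2 := by
        have : 0 ≤ lam * L := mul_nonneg hlam L.2
        gcongr
        linarith
    _ = 9 * c * (c / 4 * ‖W (k + 1) - W k‖ ^ 2) := by ring
    _ ≤ 9 * c * (F (W 0) + lam * A (W 0) - m) / K := by
        rw [mul_div_assoc]
        exact mul_le_mul_of_nonneg_left hstep (by positivity)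

end Gradient

theorem stmt_11_general (n : ℕ) (F 𝒜 : EuclideanSpace ℝ (Fin n) → ℝ)
    (hF : ContDiff ℝ 1 F) (h𝒜 : ContDiff ℝ 1 𝒜)
    (L : ℝ) (hL : 0 < L)
    (h𝒜L : LipschitzWith (Real.toNNReal L) (fun x => gradient 𝒜 x))
    (lam B Gstar : ℝ) (hlam : 0 < lam)
    (hGstar : ∀ Z, Gstar ≤ F Z + lam * 𝒜 Z) :
    ∃ C : ℝ, ∀ K : ℕ, 1 ≤ K → ∀ W : ℕ → EuclideanSpace ℝ (Fin n),
      (∀ k ≤ K, ‖gradient F (W k)‖ ≤ B) →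
      (∀ k ≤ K, ‖gradient 𝒜 (W k)‖ ≤ B / lam) →
      (∀ k, 1 ≤ k → k ≤ K → ∀ Z,
        F (W k) + (lam / (2 * (lam / Real.sqrt K))) *
            ‖W k - (W (k - 1) - (lam / Real.sqrt K) • gradient 𝒜 (W (k - 1)))‖ ^ 2
          ≤ F Z + (lam / (2 * (lam / Real.sqrt K))) *
            ‖Z - (W (k - 1) - (lam / Real.sqrt K) • gradient 𝒜 (W (k - 1)))‖ ^ 2) →
      ∃ k ≤ K, ‖gradient (fun Z => F Z + lam * 𝒜 Z) (W k)‖ ^ 2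
        ≤ 18 * (F (W 0) + lam * 𝒜 (W 0) - Gstar + 20 * L * B ^ 2) / Real.sqrt K
          + C / K := by
  have hFd := hF.differentiable one_ne_zero
  have h𝒜d := h𝒜.differentiable one_ne_zero
  refine ⟨16 * B ^ 2 * lam ^ 2 * L ^ 2, fun K hK W hgF hg𝒜 hW => ?_⟩
  have hKpos : (0 : ℝ) < K := by exact_mod_cast hK
  set s := Real.sqrt K
  have hs : 0 < s := Real.sqrt_pos.2 hKpos
  have hsK : s ^ 2 = K := Real.sq_sqrt hKpos.le
  set D := F (W 0) + lam * 𝒜 (W 0) - Gstar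
  have hD : 0 ≤ D := sub_nonneg.2 (hGstar _)
  have hLB : 0 ≤ 20 * L * B ^ 2 := by positivity
  rcases le_or_gt (2 * lam * L) s with hlarge | hsmall
  · have hαL : 2 * (lam / s) * L.toNNReal ≤ 1 := by
      rw [Real.coe_toNNReal _ hL.le, mul_div_assoc', div_mul_eq_mul_div, div_le_one hs]
      exact hlarge
    obtain ⟨k, hk, hbound⟩ := exists_sq_norm_gradient_le_of_isProxGradStep hFd h𝒜d h𝒜L hlam.le
      (div_pos hlam hs) hαL hGstar hK fun k hk => hW (k + 1) k.succ_pos hk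
    refine ⟨k, hk, hbound.trans (le_add_of_le_of_nonneg ?_ (by positivity))⟩
    calc 9 * (lam / (lam / s)) * D / K = 9 * D / s := by
          rw [div_div_cancel₀ hlam.ne', ← hsK]
          field_simp
      _ ≤ 18 * (D + 20 * L * B ^ 2) / s := by gcongr <;> linarith
  · refine ⟨0, K.zero_le, le_add_of_nonneg_of_le (by positivity) ?_⟩
    have hg0 := norm_gradient_add_const_mul_le_two_mul (hFd _) (h𝒜d _) hlam (hgF 0 K.zero_le)
      (hg𝒜 0 K.zero_le)
    have hK4 : (K : ℝ) ≤ (2 * lam * L) ^ 2 := hsK ▸ pow_le_pow_left₀ hs.le hsmall.le 2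
    rw [le_div_iff₀ hKpos]
    calc ‖gradient (fun Z => F Z + lam * 𝒜 Z) (W 0)‖ ^ 2 * K ≤ (2 * B) ^ 2 * (2 * lam * L) ^ 2 :=
          mul_le_mul (pow_le_pow_left₀ (norm_nonneg _) hg0 2) hK4 hKpos.le (sq_nonneg _)
      _ = 16 * B ^ 2 * lam ^ 2 * L ^ 2 := by ring

/-- Non-convex convergence of FedAMP: with `𝒢 = ℱ + λ𝒜` smooth (`∇ℱ, ∇𝒜` Lipschitz with
modulus `L`), gradient bounds `‖∇ℱ(W^k)‖ ≤ B`, `‖∇𝒜(W^k)‖ ≤ B/λ`, and constant step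
sizes `α_k = λ/√K`, the iterates satisfy
`min_{0≤k≤K} ‖∇𝒢(W^k)‖² ≤ 18(𝒢(W⁰) - 𝒢* + 20LB²)/√K + O(1/K)`. -/
theorem stmt_11 (n : ℕ) (F 𝒜 : EuclideanSpace ℝ (Fin n) → ℝ)
    (hF : ContDiff ℝ 1 F) (h𝒜 : ContDiff ℝ 1 𝒜)
    (L : ℝ) (hL : 0 < L)
    (hFL : LipschitzWith (Real.toNNReal L) (fun x => gradient F x))
    (h𝒜L : LipschitzWith (Real.toNNReal L) (fun x => gradient 𝒜 x))
    (lam B Gstar : ℝ) (hlam : 0 < lam) (hB : 0 < B)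
    (hGstar : ∀ Z, Gstar ≤ F Z + lam * 𝒜 Z) :
    ∃ C : ℝ, ∀ K : ℕ, 1 ≤ K → ∀ W : ℕ → EuclideanSpace ℝ (Fin n),
      (∀ k ≤ K, ‖gradient F (W k)‖ ≤ B) →
      (∀ k ≤ K, ‖gradient 𝒜 (W k)‖ ≤ B / lam) →
      (∀ k, 1 ≤ k → k ≤ K → ∀ Z,
        F (W k) + (lam / (2 * (lam / Real.sqrt K))) *
            ‖W k - (W (k - 1) - (lam / Real.sqrt K) • gradient 𝒜 (W (k - 1)))‖ ^ 2
          ≤ F Z + (lam / (2 * (lam / Real.sqrt K))) *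
            ‖Z - (W (k - 1) - (lam / Real.sqrt K) • gradient 𝒜 (W (k - 1)))‖ ^ 2) →
      ∃ k ≤ K, ‖gradient (fun Z => F Z + lam * 𝒜 Z) (W k)‖ ^ 2
        ≤ 18 * (F (W 0) + lam * 𝒜 (W 0) - Gstar + 20 * L * B ^ 2) / Real.sqrt K
          + C / K :=
  stmt_11_general n F 𝒜 hF h𝒜 L hL h𝒜L lam B Gstar hlam hGstar
end
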